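/- arXiv:1907.09622 — 7 statements merged into one kernel-verified Lean document; each statement's English description precedes it below -/
import Mathlib

section
/- Let M be a monoid with identity e, K a field, μ₁, μ₂, μ₃, μ₄ : M → K distinct nonzero multiplicative functions, and b₁, b₂, b₃, b₄ ∈ K all nonzero. Set g₁ = b₁μ₁ + b₂μ₂ and g₂ = b₃μ₃ + b₄μ₄. If f, h₁, h₂ : M → K satisfy f(xy) = g₁(x)h₁(y) + g₂(x)h₂(y) for all x, y ∈ M, then f = 0, h₁ = 0, and h₂ = 0. -/
/-!
Associativity, `f (x * (y * z)) = f ((x * y) * z)`, expresses a vanishing linear combination of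
`μ₁, …, μ₄` evaluated at `x`. By Dedekind's independence of characters every coefficient vanishes,
so `h₁ (y * z) = μ₁ y * h₁ z = μ₂ y * h₁ z` (and likewise for `h₂` with `μ₃, μ₄`). Choosing `y`
with `μ₁ y ≠ μ₂ y` forces `h₁ = 0`, and then `f x = f (x * 1) = 0`.
-/

theorem map_one_eq_one_of_map_mul {M K : Type*} [Monoid M] [MonoidWithZero K]
    [IsLeftCancelMulZero K] {μ : M → K} (hmul : ∀ x y, μ (x * y) = μ x * μ y) (hne : μ ≠ 0) :
    μ 1 = 1 := by
  obtain ⟨a, ha⟩ := Function.ne_iff.mp hne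
  exact mul_left_cancel₀ (ha : μ a ≠ 0) (by rw [← hmul, mul_one, mul_one])

theorem linearIndependent_of_map_mul {M K ι : Type*} [Monoid M] [CommRing K] [IsDomain K]
    {μ : ι → M → K} (hmul : ∀ i x y, μ i (x * y) = μ i x * μ i y) (hne : ∀ i, μ i ≠ 0)
    (hinj : Function.Injective μ) : LinearIndependent K μ := by
  let φ (i : ι) : M →* K := ⟨⟨μ i, map_one_eq_one_of_map_mul (hmul i) (hne i)⟩, hmul i⟩
  exact (linearIndependent_monoidHom M K).comp φ fun i j hij => hinj (congrArg DFunLike.coe hij)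

theorem map_mul_eq_of_map_mul_eq_sum {M K ι : Type*} [Monoid M] [CommRing K] [Fintype ι]
    {μ : ι → M → K} (hmul : ∀ i x y, μ i (x * y) = μ i x * μ i y)
    (hind : LinearIndependent K μ) {f : M → K} {k : ι → M → K}
    (hf : ∀ x y, f (x * y) = ∑ i, μ i x * k i y) (i : ι) (y z : M) :
    k i (y * z) = μ i y * k i z := by
  have hsum : ∑ j, (k j (y * z) - μ j y * k j z) • μ j = 0 := by
    funext x
    have hassoc := congrArg f (mul_assoc x y z)
    simp only [hf, hmul, Finset.sum_apply, Pi.smul_apply, smul_eq_mul, Pi.zero_apply] at hassoc ⊢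
    rw [← sub_eq_zero.mpr hassoc.symm, ← Finset.sum_sub_distrib]
    exact Finset.sum_congr rfl fun j _ => by ring
  exact sub_eq_zero.mp (Fintype.linearIndependent_iff.mp hind _ hsum i)

theorem eq_zero_of_map_mul_eq_of_ne {M K : Type*} [Mul M] [CommRing K] [IsDomain K]
    {μ ν h : M → K} (hμ : ∀ y z, h (y * z) = μ y * h z) (hν : ∀ y z, h (y * z) = ν y * h z)
    (hne : μ ≠ ν) : h = 0 := by
  obtain ⟨y, hy⟩ := Function.ne_iff.mp hne
  funext z
  have : (μ y - ν y) * h z = 0 := by rw [sub_mul, ← hμ, ← hν, sub_self]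
  exact (mul_eq_zero.mp this).resolve_left (sub_ne_zero.mpr hy)

/-- Degenerate Levi-Civita equation with `g₁ = b₁μ₁ + b₂μ₂`, `g₂ = b₃μ₃ + b₄μ₄`:
the only solution is the trivial one. -/
theorem stmt_2 {M : Type*} [Monoid M] {K : Type*} [Field K]
    (μ₁ μ₂ μ₃ μ₄ : M → K)
    (hmul₁ : ∀ x y, μ₁ (x * y) = μ₁ x * μ₁ y)
    (hmul₂ : ∀ x y, μ₂ (x * y) = μ₂ x * μ₂ y)
    (hmul₃ : ∀ x y, μ₃ (x * y) = μ₃ x * μ₃ y)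
    (hmul₄ : ∀ x y, μ₄ (x * y) = μ₄ x * μ₄ y)
    (hne₁ : μ₁ ≠ 0) (hne₂ : μ₂ ≠ 0) (hne₃ : μ₃ ≠ 0) (hne₄ : μ₄ ≠ 0)
    (hd₁₂ : μ₁ ≠ μ₂) (hd₁₃ : μ₁ ≠ μ₃) (hd₁₄ : μ₁ ≠ μ₄)
    (hd₂₃ : μ₂ ≠ μ₃) (hd₂₄ : μ₂ ≠ μ₄) (hd₃₄ : μ₃ ≠ μ₄)
    (b₁ b₂ b₃ b₄ : K)
    (hb₁ : b₁ ≠ 0) (hb₂ : b₂ ≠ 0) (hb₃ : b₃ ≠ 0) (hb₄ : b₄ ≠ 0)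
    (f h₁ h₂ : M → K)
    (heq : ∀ x y, f (x * y) =
      (b₁ * μ₁ x + b₂ * μ₂ x) * h₁ y + (b₃ * μ₃ x + b₄ * μ₄ x) * h₂ y) :
    f = 0 ∧ h₁ = 0 ∧ h₂ = 0 := by
  set μ : Fin 4 → M → K := ![μ₁, μ₂, μ₃, μ₄]
  have hmul : ∀ i x y, μ i (x * y) = μ i x * μ i y := by
    intro i; fin_cases i <;> assumption
  have hind : LinearIndependent K μ := by
    refine linearIndependent_of_map_mul hmul (fun i => by fin_cases i <;> assumption) ?_
    intro i j hij
    fin_cases i <;> fin_cases j <;> simp_all [μ, eq_comm]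
  have hk := map_mul_eq_of_map_mul_eq_sum (f := f) (k := ![b₁ • h₁, b₂ • h₁, b₃ • h₂, b₄ • h₂])
    hmul hind (fun x y => by simp [μ, Fin.sum_univ_four, heq]; ring)
  have hh₁ : h₁ = 0 := eq_zero_of_map_mul_eq_of_ne (μ := μ₁) (ν := μ₂)
    (fun y z => mul_left_cancel₀ hb₁ (by rw [mul_left_comm]; simpa [μ] using hk 0 y z))
    (fun y z => mul_left_cancel₀ hb₂ (by rw [mul_left_comm]; simpa [μ] using hk 1 y z)) hd₁₂
  have hh₂ : h₂ = 0 := eq_zero_of_map_mul_eq_of_ne (μ := μ₃) (ν := μ₄)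
    (fun y z => mul_left_cancel₀ hb₃ (by rw [mul_left_comm]; simpa [μ] using hk 2 y z))
    (fun y z => mul_left_cancel₀ hb₄ (by rw [mul_left_comm]; simpa [μ] using hk 3 y z)) hd₃₄
  refine ⟨funext fun x => ?_, hh₁, hh₂⟩
  simpa [hh₁, hh₂] using heq x 1
end

section
/- Let M be a monoid with identity e and K a field. Let μ₁,...,μₘ : M → K be distinct nonzero multiplicative functions, b₁,...,bₘ ∈ K all nonzero, and let J : {1,...,m} → {1,...,n} be a surjective function such that each fiber J⁻¹({j}) has at least 2 elements. If f, h₁,...,hₙ : M → K satisfy f(xy) = Σᵢ₌₁ᵐ bᵢ μᵢ(x) h_{J(i)}(y) for all x, y ∈ M, then f = 0 and hⱼ = 0 for all j ∈ {1,...,n}. -/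
/-!
Comparing the two expansions of `f (x * (y * z)) = f ((x * y) * z)` and using the linear
independence of distinct multiplicative characters (Artin–Dedekind) shows that every
`g = h (J i)` satisfies `g (y * z) = μ i y * g z`. Each `h j` therefore satisfies this for two
distinct characters `μ i ≠ μ i'`, so `(μ i y - μ i' y) * h j z = 0` for all `y, z`, forcing
`h j = 0`; then `f x = f (x * 1) = 0`.
-/

open Function

section Multiplicative

variable {M K : Type*}

theorem map_one_eq_one_of_multiplicative [MulOneClass M] [MonoidWithZero K]
    [IsLeftCancelMulZero K] {μ : M → K} (hmul : ∀ x y, μ (x * y) = μ x * μ y) (hne : μ ≠ 0) :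
    μ 1 = 1 := by
  have hidem : IsIdempotentElem (μ 1) := by rw [IsIdempotentElem, ← hmul, mul_one]
  refine (IsIdempotentElem.iff_eq_zero_or_one.mp hidem).resolve_left fun h0 => hne ?_
  funext x
  simpa [h0] using hmul x 1

def MonoidHom.ofMultiplicative [MulOneClass M] [MonoidWithZero K] [IsLeftCancelMulZero K]
    (μ : M → K) (hmul : ∀ x y, μ (x * y) = μ x * μ y) (hne : μ ≠ 0) : M →* K where
  toFun := μ
  map_one' := map_one_eq_one_of_multiplicative hmul hne
  map_mul' := hmul

theorem linearIndependent_of_multiplicative [MulOneClass M] [CommRing K] [IsDomain K]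
    {ι : Type*} {μ : ι → M → K} (hmul : ∀ i x y, μ i (x * y) = μ i x * μ i y)
    (hinj : Injective μ) (hne : ∀ i, μ i ≠ 0) : LinearIndependent K μ :=
  (linearIndependent_monoidHom M K).comp (fun i => MonoidHom.ofMultiplicative _ (hmul i) (hne i))
    fun _ _ hij => hinj (congrArg DFunLike.coe hij)

theorem eq_zero_of_apply_mul_eq_of_ne [Mul M] [Ring K] [NoZeroDivisors K] {μ ν g : M → K}
    (hμν : μ ≠ ν) (hμ : ∀ y z, g (y * z) = μ y * g z) (hν : ∀ y z, g (y * z) = ν y * g z) :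
    g = 0 := by
  obtain ⟨y, hy⟩ : ∃ y, μ y ≠ ν y := Function.ne_iff.mp hμν
  funext z
  have hprod : (μ y - ν y) * g z = 0 := by rw [sub_mul, ← hμ, ← hν, sub_self]
  exact (mul_eq_zero.mp hprod).resolve_left (sub_ne_zero.mpr hy)

end Multiplicative

theorem apply_mul_eq_of_sum_mul_eq {M K ι : Type*} [Monoid M] [CommRing K] [IsDomain K]
    [Fintype ι] {μ : ι → M → K} (hμ : LinearIndependent K μ)
    (hmul : ∀ i x y, μ i (x * y) = μ i x * μ i y) {b : ι → K} (hb : ∀ i, b i ≠ 0)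
    {f : M → K} {g : ι → M → K} (heq : ∀ x y, f (x * y) = ∑ i, b i * μ i x * g i y)
    (i : ι) (y z : M) : g i (y * z) = μ i y * g i z := by
  have hcomb : ∑ k, (b k * g k (y * z)) • μ k = ∑ k, (b k * (μ k y * g k z)) • μ k := by
    funext x
    simp only [Finset.sum_apply, Pi.smul_apply, smul_eq_mul]
    calc ∑ k, b k * g k (y * z) * μ k x
        = f (x * (y * z)) := by rw [heq]; exact Finset.sum_congr rfl fun k _ => by ring
      _ = f (x * y * z) := by rw [mul_assoc]
      _ = ∑ k, b k * (μ k y * g k z) * μ k x := by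
        rw [heq]; exact Finset.sum_congr rfl fun k _ => by rw [hmul]; ring
  exact mul_left_cancel₀ (hb i) (Fintype.linearIndependent_iffₛ.mp hμ _ _ hcomb i)

theorem stmt_3_general {M : Type*} [Monoid M] {K : Type*} [Field K] {m n : ℕ}
    (μ : Fin m → M → K)
    (hmul : ∀ i, ∀ x y : M, μ i (x * y) = μ i x * μ i y)
    (hdist : Function.Injective μ) (hne : ∀ i, μ i ≠ 0)
    (b : Fin m → K) (hb : ∀ i, b i ≠ 0)
    (J : Fin m → Fin n)
    (hfib : ∀ j, 2 ≤ (Finset.univ.filter fun i => J i = j).card)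
    (f : M → K) (h : Fin n → M → K)
    (heq : ∀ x y, f (x * y) = ∑ i, b i * μ i x * h (J i) y) :
    f = 0 ∧ ∀ j, h j = 0 := by
  have htransl := apply_mul_eq_of_sum_mul_eq
    (linearIndependent_of_multiplicative hmul hdist hne) hmul hb heq
  have hh : ∀ j, h j = 0 := by
    intro j
    obtain ⟨i, i', hi, hi', hii'⟩ := Finset.one_lt_card_iff.mp (hfib j)
    simp only [Finset.mem_filter_univ] at hi hi'
    subst hi
    exact eq_zero_of_apply_mul_eq_of_ne (hdist.ne hii') (htransl i) (hi' ▸ htransl i')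
  refine ⟨funext fun x => ?_, hh⟩
  simpa [hh] using heq x 1

/-- Degenerate Levi-Civita equation `f(xy) = Σᵢ bᵢ μᵢ(x) h_{J(i)}(y)` where each fiber
of the surjection `J` has at least 2 elements: the only solution is trivial. -/
theorem stmt_3 {M : Type*} [Monoid M] {K : Type*} [Field K] {m n : ℕ}
    (μ : Fin m → M → K)
    (hmul : ∀ i, ∀ x y : M, μ i (x * y) = μ i x * μ i y)
    (hdist : Function.Injective μ) (hne : ∀ i, μ i ≠ 0)
    (b : Fin m → K) (hb : ∀ i, b i ≠ 0)
    (J : Fin m → Fin n) (hJsurj : Function.Surjective J)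
    (hfib : ∀ j, 2 ≤ (Finset.univ.filter fun i => J i = j).card)
    (f : M → K) (h : Fin n → M → K)
    (heq : ∀ x y, f (x * y) = ∑ i, b i * μ i x * h (J i) y) :
    f = 0 ∧ ∀ j, h j = 0 :=
  stmt_3_general μ hmul hdist hne b hb J hfib f h heq
end

section
/- Let M be a monoid, K a field, μ₁,...,μₘ : M → K distinct nonzero multiplicative functions, b₁,...,bₘ ∈ K all nonzero, and J : {1,...,m} → {1,...,n} a surjection whose fibers all have at least 2 elements. Suppose f, g, h, h₁,...,hₙ : M → K satisfy f(xy) = g(x)h(y) + Σᵢ₌₁ᵐ bᵢμᵢ(x)h_{J(i)}(y) for all x, y ∈ M, with f ≠ 0. If the set {g, μ₁,...,μₘ} is linearly independent over K, then the set {f, μ₁,...,μₘ} is also linearly independent over K. -/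
/-!
Suppose `f = ∑ dᵢ μᵢ`. Expanding `f (x * y)` with multiplicativity and comparing it with the
functional equation, the independence of `{g, μ₁, …, μₘ}` in the variable `x` gives
`bᵢ • h_{J(i)} = dᵢ • μᵢ` for every `i`. Two distinct indices `i, i'` in one fibre of `J` share
`h_{J(i)}`, so `b_{i'} dᵢ • μᵢ = bᵢ d_{i'} • μ_{i'}`, which forces `dᵢ = 0`; hence `f = 0`.
So `f ∉ span {μᵢ}`, and `{f, μ₁, …, μₘ}` is independent.
-/

theorem LinearIndependent.eq_zero_of_smul_eq_smul {ι R V : Type*} [Ring R] [AddCommGroup V]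
    [Module R V] {v : ι → V} (hv : LinearIndependent R v) {i j : ι} (hij : i ≠ j) {s t : R}
    (h : s • v i = t • v j) : s = 0 :=
  ((LinearIndepOn.pair_iff v hij).mp (hv.linearIndepOn _) s (-t)
    (by rw [neg_smul, ← sub_eq_add_neg, sub_eq_zero, h])).1

theorem LinearIndependent.eq_zero_of_finCons {R V : Type*} [Ring R] [AddCommGroup V]
    [Module R V] {m : ℕ} {w : V} {v : Fin m → V}
    (hv : LinearIndependent R (Fin.cons w v : Fin (m + 1) → V)) {a : R} {c : Fin m → R}
    (h : a • w + ∑ i, c i • v i = 0) (i : Fin m) : c i = 0 := by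
  simpa using
    Fintype.linearIndependent_iff.mp hv (Fin.cons a c) (by simpa [Fin.sum_univ_succ]) i.succ

theorem LinearIndependent.eq_zero_of_smul_comp_eq_smul {ι κ R V : Type*} [CommRing R]
    [NoZeroDivisors R] [AddCommGroup V] [Module R V] {v : ι → V} (hv : LinearIndependent R v)
    {φ : κ → V} {J : ι → κ} {b d : ι → R} (hb : ∀ i, b i ≠ 0) (hφ : ∀ i, b i • φ (J i) = d i • v i)
    {i j : ι} (hij : i ≠ j) (hJ : J j = J i) : d i = 0 := by
  have : (b j * d i) • v i = (b i * d j) • v j := by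
    rw [mul_smul, mul_smul, ← hφ, ← hφ, hJ, smul_smul, smul_smul, mul_comm]
  exact (mul_eq_zero.mp (hv.eq_zero_of_smul_eq_smul hij this)).resolve_left (hb j)

theorem smul_comp_eq_smul_of_sum_eq {M K : Type*} [Monoid M] [CommRing K] {m n : ℕ}
    {μ : Fin m → M → K} (hmul : ∀ i, ∀ x y : M, μ i (x * y) = μ i x * μ i y)
    {b : Fin m → K} {J : Fin m → Fin n} {f g h : M → K} {h' : Fin n → M → K}
    (heq : ∀ x y, f (x * y) = g x * h y + ∑ i, b i * μ i x * h' (J i) y)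
    (hgind : LinearIndependent K (Fin.cons g μ : Fin (m + 1) → M → K))
    {d : Fin m → K} (hf : ∑ i, d i • μ i = f) (i : Fin m) :
    b i • h' (J i) = d i • μ i := by
  funext y
  refine sub_eq_zero.mp (hgind.eq_zero_of_finCons (a := h y)
    (c := fun i => b i * h' (J i) y - d i * μ i y) ?_ i)
  funext x
  have hxy := heq x y
  simp only [← hf, Finset.sum_apply, Pi.smul_apply, smul_eq_mul, hmul] at hxy
  have hsum : ∑ i, (b i * h' (J i) y - d i * μ i y) * μ i x
      = ∑ i, b i * μ i x * h' (J i) y - ∑ i, d i * (μ i x * μ i y) := by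
    rw [← Finset.sum_sub_distrib]
    exact Finset.sum_congr rfl fun _ _ => by ring
  simp only [Pi.add_apply, Pi.smul_apply, Finset.sum_apply, smul_eq_mul, Pi.zero_apply, hsum]
  linear_combination -hxy

theorem stmt_4_general {M : Type*} [Monoid M] {K : Type*} [Field K] {m n : ℕ}
    (μ : Fin m → M → K)
    (hmul : ∀ i, ∀ x y : M, μ i (x * y) = μ i x * μ i y)
    (b : Fin m → K) (hb : ∀ i, b i ≠ 0)
    (J : Fin m → Fin n)
    (hfib : ∀ j, 2 ≤ (Finset.univ.filter fun i => J i = j).card)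
    (f g h : M → K) (h' : Fin n → M → K)
    (heq : ∀ x y, f (x * y) = g x * h y + ∑ i, b i * μ i x * h' (J i) y)
    (hf : f ≠ 0)
    (hgind : LinearIndependent K (Fin.cons g μ : Fin (m + 1) → M → K)) :
    LinearIndependent K (Fin.cons f μ : Fin (m + 1) → M → K) := by
  have hμ : LinearIndependent K μ := (linearIndependent_finCons.mp hgind).1
  refine linearIndependent_finCons.mpr ⟨hμ, fun hspan => hf ?_⟩
  obtain ⟨d, hd⟩ := (Submodule.mem_span_range_iff_exists_fun K).mp hspan
  have hcoeff : ∀ i, b i • h' (J i) = d i • μ i := smul_comp_eq_smul_of_sum_eq hmul heq hgind hd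
  have hd0 : ∀ i, d i = 0 := fun i => by
    obtain ⟨j, hj, hji⟩ := Finset.exists_mem_ne (hfib (J i)) i
    exact hμ.eq_zero_of_smul_comp_eq_smul hb hcoeff hji.symm (Finset.mem_filter.mp hj).2
  simp [← hd, hd0]

/-- If `(f,g,h,h₁,…,hₙ)` solves the Levi-Civita equation with `f ≠ 0` and
`{g, μ₁,…,μₘ}` linearly independent, then `{f, μ₁,…,μₘ}` is linearly independent. -/
theorem stmt_4 {M : Type*} [Monoid M] {K : Type*} [Field K] {m n : ℕ}
    (μ : Fin m → M → K)
    (hmul : ∀ i, ∀ x y : M, μ i (x * y) = μ i x * μ i y)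
    (hdist : Function.Injective μ) (hne : ∀ i, μ i ≠ 0)
    (b : Fin m → K) (hb : ∀ i, b i ≠ 0)
    (J : Fin m → Fin n) (hJsurj : Function.Surjective J)
    (hfib : ∀ j, 2 ≤ (Finset.univ.filter fun i => J i = j).card)
    (f g h : M → K) (h' : Fin n → M → K)
    (heq : ∀ x y, f (x * y) = g x * h y + ∑ i, b i * μ i x * h' (J i) y)
    (hf : f ≠ 0)
    (hgind : LinearIndependent K (Fin.cons g μ : Fin (m + 1) → M → K)) :
    LinearIndependent K (Fin.cons f μ : Fin (m + 1) → M → K) :=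
  stmt_4_general μ hmul b hb J hfib f g h h' heq hf hgind
end

section
/- Let M be a monoid, K a field, μ₁,...,μₘ : M → K distinct nonzero multiplicative functions, b₁,...,bₘ ∈ K all nonzero, and J : {1,...,m} → {1,...,n} a surjection whose fibers all have at least 2 elements. Suppose f, g, h, h₁,...,hₙ : M → K satisfy f(xy) = g(x)h(y) + Σᵢ₌₁ᵐ bᵢμᵢ(x)h_{J(i)}(y) for all x, y ∈ M, with f ≠ 0 and {g, μ₁,...,μₘ} linearly independent. Then h(e) ≠ 0, where e is the identity of M. -/
/-!
Suppose `h 1 = 0`. Then `y = 1` turns the equation into `f = ∑ bᵢ hⱼ₍ᵢ₎(1) μᵢ`, and comparing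
the two expansions of `f (x * y)` as functions of `x`, linear independence of `{g, μ₁, …, μₘ}` forces
`h_{J i} = h_{J i}(1) μᵢ`. Every fibre of `J` contains two indices with distinct characters `μᵢ`,
so `h_j(1) = 0` for all `j`, whence `f = 0`.
-/

theorem LinearIndependent.coeff_eq_zero_of_forall_fin_cons {M K : Type*} [Ring K] {m : ℕ}
    {g : M → K} {μ : Fin m → M → K}
    (hind : LinearIndependent K (Fin.cons g μ : Fin (m + 1) → M → K))
    {a : K} {c : Fin m → K} (hzero : ∀ x, a * g x + ∑ i, c i * μ i x = 0) (i : Fin m) :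
    c i = 0 := by
  have hsum : ∑ k, (Fin.cons a c : Fin (m + 1) → K) k • (Fin.cons g μ : Fin (m + 1) → M → K) k
      = 0 := by
    funext x
    simpa [Fin.sum_univ_succ, Finset.sum_apply] using hzero x
  simpa using Fintype.linearIndependent_iff.mp hind _ hsum i.succ

theorem eq_zero_of_forall_eq_mul_of_ne {M K : Type*} [One M] [MonoidWithZero K]
    [IsLeftCancelMulZero K] {φ χ₁ χ₂ : M → K}
    (h₁ : ∀ y, φ y = φ 1 * χ₁ y) (h₂ : ∀ y, φ y = φ 1 * χ₂ y) (hχ : χ₁ ≠ χ₂) : φ 1 = 0 := by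
  by_contra hφ
  exact hχ <| funext fun y => mul_left_cancel₀ hφ <| (h₁ y).symm.trans (h₂ y)

section LeviCivita

variable {M K : Type*} [Monoid M] [Field K] {m n : ℕ} {μ : Fin m → M → K} {b : Fin m → K}
  {J : Fin m → Fin n} {f g h : M → K} {h' : Fin n → M → K}

theorem eq_sum_of_apply_one_eq_zero
    (heq : ∀ x y, f (x * y) = g x * h y + ∑ i, b i * μ i x * h' (J i) y) (h1 : h 1 = 0) (x : M) :
    f x = ∑ i, b i * μ i x * h' (J i) 1 := by
  simpa [h1] using heq x 1

theorem apply_eq_apply_one_mul_of_apply_one_eq_zero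
    (hmul : ∀ i, ∀ x y : M, μ i (x * y) = μ i x * μ i y) (hb : ∀ i, b i ≠ 0)
    (heq : ∀ x y, f (x * y) = g x * h y + ∑ i, b i * μ i x * h' (J i) y)
    (hgind : LinearIndependent K (Fin.cons g μ : Fin (m + 1) → M → K)) (h1 : h 1 = 0)
    (i : Fin m) (y : M) : h' (J i) y = h' (J i) 1 * μ i y := by
  have hzero : ∀ x, h y * g x + ∑ i, b i * (h' (J i) y - h' (J i) 1 * μ i y) * μ i x = 0 := by
    intro x
    have hxy := eq_sum_of_apply_one_eq_zero heq h1 (x * y)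
    rw [heq] at hxy
    simp only [hmul] at hxy
    calc _ = g x * h y + ∑ i, b i * μ i x * h' (J i) y
          - ∑ i, b i * (μ i x * μ i y) * h' (J i) 1 := by
          rw [add_sub_assoc, ← Finset.sum_sub_distrib, mul_comm]
          exact congrArg _ (Finset.sum_congr rfl fun i _ => by ring)
      _ = 0 := sub_eq_zero.mpr hxy
  have hcoeff := hgind.coeff_eq_zero_of_forall_fin_cons hzero i
  exact sub_eq_zero.mp ((mul_eq_zero.mp hcoeff).resolve_left (hb i))

end LeviCivita

theorem stmt_5_general {M : Type*} [Monoid M] {K : Type*} [Field K] {m n : ℕ}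
    (μ : Fin m → M → K)
    (hmul : ∀ i, ∀ x y : M, μ i (x * y) = μ i x * μ i y)
    (hdist : Function.Injective μ)
    (b : Fin m → K) (hb : ∀ i, b i ≠ 0)
    (J : Fin m → Fin n)
    (hfib : ∀ j, 2 ≤ (Finset.univ.filter fun i => J i = j).card)
    (f g h : M → K) (h' : Fin n → M → K)
    (heq : ∀ x y, f (x * y) = g x * h y + ∑ i, b i * μ i x * h' (J i) y)
    (hf : f ≠ 0)
    (hgind : LinearIndependent K (Fin.cons g μ : Fin (m + 1) → M → K)) :
    h 1 ≠ 0 := by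
  intro h1
  have hshift := apply_eq_apply_one_mul_of_apply_one_eq_zero hmul hb heq hgind h1
  have hfibre_zero : ∀ i, h' (J i) 1 = 0 := by
    intro i
    obtain ⟨i₂, hi₂, hne⟩ := (Finset.one_lt_card_iff_nontrivial.mp (hfib (J i))).exists_ne i
    have hJ : J i₂ = J i := (Finset.mem_filter.mp hi₂).2
    exact eq_zero_of_forall_eq_mul_of_ne (hshift i) (hJ ▸ hshift i₂) (hdist.ne hne.symm)
  refine hf (funext fun x => ?_)
  simp [eq_sum_of_apply_one_eq_zero heq h1 x, hfibre_zero]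

/-- Under the hypotheses of the nondegenerate case of the Levi-Civita equation
(`f ≠ 0`, `{g, μ₁,…,μₘ}` linearly independent), we have `h(e) ≠ 0`. -/
theorem stmt_5 {M : Type*} [Monoid M] {K : Type*} [Field K] {m n : ℕ}
    (μ : Fin m → M → K)
    (hmul : ∀ i, ∀ x y : M, μ i (x * y) = μ i x * μ i y)
    (hdist : Function.Injective μ) (hne : ∀ i, μ i ≠ 0)
    (b : Fin m → K) (hb : ∀ i, b i ≠ 0)
    (J : Fin m → Fin n) (hJsurj : Function.Surjective J)
    (hfib : ∀ j, 2 ≤ (Finset.univ.filter fun i => J i = j).card)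
    (f g h : M → K) (h' : Fin n → M → K)
    (heq : ∀ x y, f (x * y) = g x * h y + ∑ i, b i * μ i x * h' (J i) y)
    (hf : f ≠ 0)
    (hgind : LinearIndependent K (Fin.cons g μ : Fin (m + 1) → M → K)) :
    h 1 ≠ 0 :=
  stmt_5_general μ hmul hdist b hb J hfib f g h h' heq hf hgind
end

section
/- Let M be a monoid with identity e, K a field, μ₁,...,μₘ : M → K distinct nonzero multiplicative functions, b₁,...,bₘ ∈ K all nonzero, and J : {1,...,m} → {1,...,n} a surjection whose fibers all have at least 2 elements. Suppose f, g, h, h₁,...,hₙ : M → K satisfy f(xy) = g(x)h(y) + Σᵢ₌₁ᵐ bᵢμᵢ(x)h_{J(i)}(y) for all x, y ∈ M, with f ≠ 0, h(e) ≠ 0, and {g, μ₁,...,μₘ} linearly independent. Then there exist a nonzero multiplicative function χ : M → K with χ ≠ μᵢ for all i, constants a, b ∈ K \ {0} and c₁,...,cₙ ∈ K, such that f = abχ, h = aχ, hⱼ = a cⱼ χ for each j, and g = bχ − Σⱼ₌₁ⁿ cⱼ gⱼ, where gⱼ := Σ_{i ∈ J⁻¹({j})} bᵢμᵢ. -/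
/-!
Expanding `f (x * y * z)` by associativity in two ways gives a relation in `x` that is a linear
combination of `g, μ₁, …, μₘ`; by linear independence all its coefficients vanish. The coefficient
of `g` says that `h / h 1` is multiplicative, and the coefficient of `μᵢ` says that
`h 1 * h_{J i} (y z) - h_{J i} y * h z = μᵢ y * (h 1 * h_{J i} z - h_{J i} 1 * h z)`. Since every
fibre of `J` contains two indices with distinct `μᵢ`, the bracket on the right vanishes, so each
`h_j` is a multiple of `h`. Then `f` is a multiple of `h` too, and the formula for `g` is the
equation at `y = 1`. Finally `χ = μᵢ` would put `g` in the span of the `μᵢ`.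
-/

open Finset

theorem LinearIndependent.coeffs_eq_zero_of_finCons {X K : Type*} [Field K] {m : ℕ}
    {g : X → K} {μ : Fin m → X → K}
    (hind : LinearIndependent K (Fin.cons g μ : Fin (m + 1) → X → K)) {α : K} {β : Fin m → K}
    (h0 : ∀ x, α * g x + ∑ i, β i * μ i x = 0) : α = 0 ∧ ∀ i, β i = 0 := by
  have hcoef := Fintype.linearIndependent_iff.mp hind (Fin.cons α β)
    (funext fun x => by simpa [Fin.sum_univ_succ, Finset.sum_apply] using h0 x)
  exact ⟨by simpa using hcoef 0, fun i => by simpa using hcoef i.succ⟩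

theorem LinearIndependent.ne_of_finCons_eq_sub_sum {X K : Type*} [Field K] {m : ℕ}
    {g χ : X → K} {μ : Fin m → X → K}
    (hind : LinearIndependent K (Fin.cons g μ : Fin (m + 1) → X → K)) {a : K} {β : Fin m → K}
    (hg : ∀ x, g x = a * χ x - ∑ i, β i * μ i x) (i₀ : Fin m) : χ ≠ μ i₀ := by
  rintro rfl
  refine (linearIndependent_finCons.mp hind).2 ?_
  have hg' : g = a • μ i₀ - ∑ i, β i • μ i := funext fun x => by simp [hg, Finset.sum_apply]
  rw [hg']
  exact Submodule.sub_mem _ (Submodule.smul_mem _ _ (Submodule.subset_span ⟨i₀, rfl⟩))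
    (Submodule.sum_mem _ fun i _ => Submodule.smul_mem _ _ (Submodule.subset_span ⟨i, rfl⟩))

theorem Finset.sum_mul_sum_fiberwise {ι κ R : Type*} [Fintype κ] [DecidableEq κ]
    [NonUnitalNonAssocSemiring R] (s : Finset ι) (J : ι → κ) (c : κ → R) (a : ι → R) :
    ∑ j, c j * ∑ i ∈ s with J i = j, a i = ∑ i ∈ s, c (J i) * a i := by
  simp_rw [mul_sum]
  rw [← sum_fiberwise s J]
  exact sum_congr rfl fun j _ => sum_congr rfl fun i hi => by rw [(mem_filter.mp hi).2]

section LeviCivita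

variable {M K : Type*} [Monoid M] [Field K] {m : ℕ} {μ : Fin m → M → K}
  {f g h : M → K} {b : Fin m → K} {k : Fin m → M → K}

/-- Compare the expansions of `f (x * (y * z))` and `f ((x * y) * z)`, eliminating `g (x * y)`
through the equation at `(x * y, 1)`. -/
theorem levi_civita_cocycle (hmul : ∀ i x y, μ i (x * y) = μ i x * μ i y)
    (heq : ∀ x y, f (x * y) = g x * h y + ∑ i, b i * μ i x * k i y) (x y z : M) :
    (h 1 * h (y * z) - h y * h z) * g x +
      ∑ i, b i * (h 1 * k i (y * z) - k i y * h z - μ i y * (h 1 * k i z - k i 1 * h z))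
        * μ i x = 0 := by
  have hxy_z : f (x * y * z) = g (x * y) * h z + ∑ i, b i * μ i x * μ i y * k i z := by
    rw [heq (x * y) z]
    simp only [hmul, mul_assoc]
  have hxy_1 : f (x * y) = g (x * y) * h 1 + ∑ i, b i * μ i x * μ i y * k i 1 := by
    rw [← mul_one (x * y), heq (x * y) 1, mul_one]
    simp only [hmul, mul_assoc]
  have hsum : ∑ i, b i * (h 1 * k i (y * z) - k i y * h z - μ i y * (h 1 * k i z - k i 1 * h z))
        * μ i x
      = h 1 * ∑ i, b i * μ i x * k i (y * z) - (∑ i, b i * μ i x * k i y) * h z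
        - h 1 * ∑ i, b i * μ i x * μ i y * k i z + (∑ i, b i * μ i x * μ i y * k i 1) * h z := by
    simp only [mul_sum, sum_mul, ← sum_sub_distrib, ← sum_add_distrib]
    exact sum_congr rfl fun i _ => by ring
  rw [hsum]
  linear_combination h 1 * hxy_z - h 1 * heq x (y * z) + h z * heq x y - h z * hxy_1
    - h 1 * congrArg f (mul_assoc x y z)


theorem levi_civita_coeffs (hmul : ∀ i x y, μ i (x * y) = μ i x * μ i y)
    (heq : ∀ x y, f (x * y) = g x * h y + ∑ i, b i * μ i x * k i y)
    (hind : LinearIndependent K (Fin.cons g μ : Fin (m + 1) → M → K)) (hb : ∀ i, b i ≠ 0)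
    (y z : M) :
    h 1 * h (y * z) = h y * h z ∧
      ∀ i, h 1 * k i (y * z) - k i y * h z = μ i y * (h 1 * k i z - k i 1 * h z) := by
  obtain ⟨hα, hβ⟩ := hind.coeffs_eq_zero_of_finCons (levi_civita_cocycle hmul heq · y z)
  exact ⟨sub_eq_zero.mp hα, fun i => sub_eq_zero.mp ((mul_eq_zero.mp (hβ i)).resolve_left (hb i))⟩

theorem levi_civita_map_proportional
    (heq : ∀ x y, f (x * y) = g x * h y + ∑ i, b i * μ i x * k i y)
    (hk : ∀ i x, h 1 * k i x = k i 1 * h x) (x : M) :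
    h 1 * f x = f 1 * h x := by
  have hsum : h 1 * ∑ i, b i * μ i 1 * k i x = (∑ i, b i * μ i 1 * k i 1) * h x := by
    simp only [mul_sum, sum_mul]
    exact sum_congr rfl fun i _ => by linear_combination b i * μ i 1 * hk i x
  have hfx := heq 1 x
  have hf1 := heq 1 1
  rw [one_mul] at hfx hf1
  linear_combination h 1 * hfx - h x * hf1 + hsum


theorem proportional_of_two_le_card_fibre {ι κ : Type*} [Fintype ι] [DecidableEq κ]
    {μ : ι → M → K} (hdist : Function.Injective μ) {J : ι → κ}
    (hfib : ∀ j, 2 ≤ #{i | J i = j}) {h : M → K} {h' : κ → M → K}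
    (hrel : ∀ i y z, h 1 * h' (J i) (y * z) - h' (J i) y * h z =
      μ i y * (h 1 * h' (J i) z - h' (J i) 1 * h z))
    (j : κ) (z : M) : h 1 * h' j z = h' j 1 * h z := by
  obtain ⟨i, hi, i', hi', hii'⟩ := one_lt_card.mp (hfib j)
  obtain ⟨y, hy⟩ := Function.ne_iff.mp (hdist.ne hii')
  have hrel_i := hrel i y z
  have hrel_i' := hrel i' y z
  rw [(mem_filter.mp hi).2] at hrel_i
  rw [(mem_filter.mp hi').2] at hrel_i'
  have hdiff : (μ i y - μ i' y) * (h 1 * h' j z - h' j 1 * h z) = 0 := by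
    linear_combination hrel_i' - hrel_i
  exact sub_eq_zero.mp ((mul_eq_zero.mp hdiff).resolve_left (sub_ne_zero.mpr hy))

end LeviCivita

theorem inv_mul_map_mul {M K : Type*} [Monoid M] [Field K] {h : M → K} (h1 : h 1 ≠ 0)
    (hh : ∀ y z, h 1 * h (y * z) = h y * h z) (y z : M) :
    (h 1)⁻¹ * h (y * z) = (h 1)⁻¹ * h y * ((h 1)⁻¹ * h z) := by
  field_simp
  exact hh y z

theorem stmt_6_general {M : Type*} [Monoid M] {K : Type*} [Field K] {m n : ℕ}
    (μ : Fin m → M → K)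
    (hmul : ∀ i, ∀ x y : M, μ i (x * y) = μ i x * μ i y)
    (hdist : Function.Injective μ)
    (b : Fin m → K) (hb : ∀ i, b i ≠ 0)
    (J : Fin m → Fin n)
    (hfib : ∀ j, 2 ≤ (Finset.univ.filter fun i => J i = j).card)
    (f g h : M → K) (h' : Fin n → M → K)
    (heq : ∀ x y, f (x * y) = g x * h y + ∑ i, b i * μ i x * h' (J i) y)
    (hf : f ≠ 0) (hhe : h 1 ≠ 0)
    (hgind : LinearIndependent K (Fin.cons g μ : Fin (m + 1) → M → K)) :
    ∃ (χ : M → K) (a b' : K) (c : Fin n → K),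
      (∀ x y, χ (x * y) = χ x * χ y) ∧ χ ≠ 0 ∧ (∀ i, χ ≠ μ i) ∧
      a ≠ 0 ∧ b' ≠ 0 ∧
      f = (fun x => a * b' * χ x) ∧
      h = (fun x => a * χ x) ∧
      (∀ j, h' j = fun x => a * c j * χ x) ∧
      g = (fun x => b' * χ x -
        ∑ j, c j * ∑ i ∈ Finset.univ.filter fun i => J i = j, b i * μ i x) := by
  have hcoeffs := levi_civita_coeffs (k := fun i => h' (J i)) hmul heq hgind hb
  have hh' : ∀ j z, h 1 * h' j z = h' j 1 * h z :=
    proportional_of_two_le_card_fibre hdist hfib fun i y z => (hcoeffs y z).2 i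
  have hf' : ∀ x, h 1 * f x = f 1 * h x :=
    levi_civita_map_proportional heq fun i => hh' (J i)
  have hf1 : f 1 ≠ 0 := fun h0 => hf (funext fun x => by simpa [h0, hhe] using hf' x)
  set χ : M → K := fun x => (h 1)⁻¹ * h x
  set c : Fin n → K := fun j => h' j 1 / h 1
  have hg : ∀ x, g x = f 1 / h 1 * χ x - ∑ i, c (J i) * b i * μ i x := by
    intro x
    have hsum : ∑ i, c (J i) * b i * μ i x = (∑ i, b i * μ i x * h' (J i) 1) / h 1 := by
      rw [sum_div]
      exact sum_congr rfl fun i _ => by ring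
    have hx1 := heq x 1
    rw [mul_one] at hx1
    rw [hsum]
    simp only [χ]
    field_simp
    linear_combination hf' x - h 1 * hx1
  refine ⟨χ, h 1, f 1 / h 1, c, inv_mul_map_mul hhe (hcoeffs · · |>.1),
    fun h0 => by simpa [χ, hhe] using congrFun h0 1, hgind.ne_of_finCons_eq_sub_sum hg, hhe,
    div_ne_zero hf1 hhe, ?_, ?_, ?_, ?_⟩
  · funext x
    simp only [χ]
    field_simp
    linear_combination hf' x
  · funext x
    simp only [χ]
    field_simp
  · intro j
    funext x
    simp only [χ, c]
    field_simp
    linear_combination hh' j x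
  · funext x
    rw [hg, sum_mul_sum_fiberwise]
    simp only [mul_assoc]

/-- Nondegenerate case of the Levi-Civita equation: explicit solution formulas. -/
theorem stmt_6 {M : Type*} [Monoid M] {K : Type*} [Field K] {m n : ℕ}
    (μ : Fin m → M → K)
    (hmul : ∀ i, ∀ x y : M, μ i (x * y) = μ i x * μ i y)
    (hdist : Function.Injective μ) (hne : ∀ i, μ i ≠ 0)
    (b : Fin m → K) (hb : ∀ i, b i ≠ 0)
    (J : Fin m → Fin n) (hJsurj : Function.Surjective J)
    (hfib : ∀ j, 2 ≤ (Finset.univ.filter fun i => J i = j).card)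
    (f g h : M → K) (h' : Fin n → M → K)
    (heq : ∀ x y, f (x * y) = g x * h y + ∑ i, b i * μ i x * h' (J i) y)
    (hf : f ≠ 0) (hhe : h 1 ≠ 0)
    (hgind : LinearIndependent K (Fin.cons g μ : Fin (m + 1) → M → K)) :
    ∃ (χ : M → K) (a b' : K) (c : Fin n → K),
      (∀ x y, χ (x * y) = χ x * χ y) ∧ χ ≠ 0 ∧ (∀ i, χ ≠ μ i) ∧
      a ≠ 0 ∧ b' ≠ 0 ∧
      f = (fun x => a * b' * χ x) ∧
      h = (fun x => a * χ x) ∧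
      (∀ j, h' j = fun x => a * c j * χ x) ∧
      g = (fun x => b' * χ x -
        ∑ j, c j * ∑ i ∈ Finset.univ.filter fun i => J i = j, b i * μ i x) :=
  stmt_6_general μ hmul hdist b hb J hfib f g h h' heq hf hhe hgind
end

section
/- Let M be a monoid with identity e, K a field, μ₁, μ₂ : M → K two distinct multiplicative functions, and h, h' : M → K functions with h(e) ≠ 0. If for both i = 1 and i = 2 the identity h'(yz) − h'(y)h(z)/h(e) + μᵢ(y)(h'(e)h(z)/h(e) − h'(z)) = 0 holds for all y, z ∈ M, then h' = (h'(e)/h(e))·h. -/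
theorem eq_zero_of_add_mul_eq_zero_of_ne {R : Type*} [Ring R] [NoZeroDivisors R] {s a b c : R}
    (ha : s + a * c = 0) (hb : s + b * c = 0) (hab : a ≠ b) : c = 0 := by
  by_contra hc
  exact hab (mul_right_cancel₀ hc (add_left_cancel (ha.trans hb.symm)))

theorem stmt_13_general {M : Type*} [Monoid M] {K : Type*} [Field K]
    (μ₁ μ₂ : M → K)
    (hd : μ₁ ≠ μ₂)
    (h h' : M → K)
    (heq₁ : ∀ y z : M,
      h' (y * z) - h' y * h z / h 1 + μ₁ y * (h' 1 * h z / h 1 - h' z) = 0)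
    (heq₂ : ∀ y z : M,
      h' (y * z) - h' y * h z / h 1 + μ₂ y * (h' 1 * h z / h 1 - h' z) = 0) :
    h' = fun x => (h' 1 / h 1) * h x := by
  obtain ⟨y, hy⟩ := Function.ne_iff.mp hd
  funext z
  have hz := eq_zero_of_add_mul_eq_zero_of_ne (heq₁ y z) (heq₂ y z) hy
  linear_combination -hz

/-- Two distinct multiplicative functions in equation (2.4) force `h'` to be
proportional to `h`. -/
theorem stmt_13 {M : Type*} [Monoid M] {K : Type*} [Field K]
    (μ₁ μ₂ : M → K)
    (hmul₁ : ∀ x y, μ₁ (x * y) = μ₁ x * μ₁ y)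
    (hmul₂ : ∀ x y, μ₂ (x * y) = μ₂ x * μ₂ y)
    (hd : μ₁ ≠ μ₂)
    (h h' : M → K) (hhe : h 1 ≠ 0)
    (heq₁ : ∀ y z : M,
      h' (y * z) - h' y * h z / h 1 + μ₁ y * (h' 1 * h z / h 1 - h' z) = 0)
    (heq₂ : ∀ y z : M,
      h' (y * z) - h' y * h z / h 1 + μ₂ y * (h' 1 * h z / h 1 - h' z) = 0) :
    h' = fun x => (h' 1 / h 1) * h x :=
  stmt_13_general μ₁ μ₂ hd h h' heq₁ heq₂
end

section
/- Let M be a monoid with identity e, K a field, μ₁,...,μₘ : M → K distinct nonzero multiplicative functions, b₁,...,bₘ ∈ K all nonzero, and J : {1,...,m} → {1,...,n} a surjection whose fibers all have at least 2 elements. Suppose f, g, h, h₁,...,hₙ : M → K satisfy f(xy) = g(x)h(y) + Σᵢ₌₁ᵐ bᵢμᵢ(x)h_{J(i)}(y) for all x, y ∈ M, with f ≠ 0 and {g, μ₁,...,μₘ} linearly independent. Then f(e) ≠ 0. -/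
/-!
Suppose `f 1 = 0`. Putting `y = 1` in the equation expands `h 1 * g (x * y)`, as a function of
`x`, in the linearly independent family `g, μ₁, …, μₘ`. Expanding `h 1 * f (x * y * z)` in two
ways and comparing coefficients of `μᵢ` gives relations `A_{J i}(y) + μᵢ(y) B_{J i} = 0` whose
ingredients depend on `i` only through `J i`; as every fibre of `J` holds two distinct `μᵢ`,
`B_j = 0`, i.e. `h z * h'ⱼ 1 = h 1 * h'ⱼ z`. This gives `h 1 * f y = h y * f 1 = 0`, so `f = 0`
if `h 1 ≠ 0`. If `h 1 = 0`, the expansion of `h 1 * g (x * y) = 0` itself has that shape and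
forces `h'ⱼ 1 = 0`, whence `f = g * h 1 + ∑ bᵢ μᵢ h'_{J i} 1 = 0`.
-/

open Finset

theorem LinearIndependent.fin_cons_coeffs_eq_zero {α K : Type*} [Field K] {m : ℕ}
    {g : α → K} {μ : Fin m → α → K}
    (hind : LinearIndependent K (Fin.cons g μ : Fin (m + 1) → α → K)) {a : K} {c : Fin m → K}
    (hc : ∀ x, a * g x + ∑ i, c i * μ i x = 0) : a = 0 ∧ ∀ i, c i = 0 := by
  have hsum : ∑ i, (Fin.cons a c : Fin (m + 1) → K) i • (Fin.cons g μ : Fin (m + 1) → α → K) i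
      = 0 := by
    funext x
    simpa [Finset.sum_apply, Fin.sum_univ_succ] using hc x
  have hzero := Fintype.linearIndependent_iff.mp hind _ hsum
  exact ⟨by simpa using hzero 0, fun i => by simpa using hzero i.succ⟩

theorem eq_zero_of_forall_add_mul_eq_zero {α ι κ K : Type*} [Field K] [Fintype ι] [DecidableEq κ]
    {μ : ι → α → K} (hμ : Function.Injective μ) {J : ι → κ}
    (hfib : ∀ j, 2 ≤ (univ.filter fun i => J i = j).card) {A : κ → α → K} {B : κ → K}
    (hAB : ∀ i y, A (J i) y + μ i y * B (J i) = 0) (j : κ) : B j = 0 := by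
  obtain ⟨i, hi, i', hi', hii'⟩ := one_lt_card.mp (one_lt_two.trans_le (hfib j))
  simp only [mem_filter, mem_univ, true_and] at hi hi'
  by_contra hB
  refine hii' (hμ (funext fun y => mul_right_cancel₀ hB ?_))
  have e := hAB i y
  have e' := hAB i' y
  rw [hi] at e
  rw [hi'] at e'
  linear_combination e - e'

namespace LeviCivitaEq

section

variable {M K ι κ : Type*} [Monoid M] [Field K] [Fintype ι]
  {μ : ι → M → K} {b : ι → K} {J : ι → κ} {f g h : M → K} {h' : κ → M → K}

theorem h_one_mul_g_mul (hmul : ∀ i, ∀ x y : M, μ i (x * y) = μ i x * μ i y)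
    (heq : ∀ x y, f (x * y) = g x * h y + ∑ i, b i * μ i x * h' (J i) y) (x y : M) :
    h 1 * g (x * y) = h y * g x + ∑ i, b i * (h' (J i) y - μ i y * h' (J i) 1) * μ i x := by
  have hxy1 := heq (x * y) 1
  rw [mul_one] at hxy1
  have hsum : ∑ i, b i * (h' (J i) y - μ i y * h' (J i) 1) * μ i x
      = ∑ i, b i * μ i x * h' (J i) y - ∑ i, b i * μ i (x * y) * h' (J i) 1 := by
    rw [← sum_sub_distrib]
    refine sum_congr rfl fun i _ => ?_
    rw [hmul]
    ring
  rw [hsum]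
  linear_combination heq x y - hxy1

theorem assoc_identity (hmul : ∀ i, ∀ x y : M, μ i (x * y) = μ i x * μ i y)
    (heq : ∀ x y, f (x * y) = g x * h y + ∑ i, b i * μ i x * h' (J i) y) (x y z : M) :
    (h 1 * h (y * z) - h y * h z) * g x + ∑ i, b i * (h 1 * h' (J i) (y * z) - h z * h' (J i) y
      + μ i y * (h z * h' (J i) 1 - h 1 * h' (J i) z)) * μ i x = 0 := by
  have hxyz := heq (x * y) z
  rw [mul_assoc] at hxyz
  have hsum : ∑ i, b i * (h 1 * h' (J i) (y * z) - h z * h' (J i) y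
      + μ i y * (h z * h' (J i) 1 - h 1 * h' (J i) z)) * μ i x
      = h 1 * ∑ i, b i * μ i x * h' (J i) (y * z)
        - h z * ∑ i, b i * (h' (J i) y - μ i y * h' (J i) 1) * μ i x
        - h 1 * ∑ i, b i * μ i (x * y) * h' (J i) z := by
    simp only [mul_sum, ← sum_sub_distrib]
    refine sum_congr rfl fun i _ => ?_
    rw [hmul]
    ring
  rw [hsum]
  linear_combination h 1 * hxyz - h 1 * heq x (y * z) + h z * h_one_mul_g_mul hmul heq x y

end

variable {M K κ : Type*} [Monoid M] [Field K] [DecidableEq κ] {m : ℕ} {μ : Fin m → M → K}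
  {b : Fin m → K} {J : Fin m → κ} {f g h : M → K} {h' : κ → M → K}

theorem h_mul_h'_one (hmul : ∀ i, ∀ x y : M, μ i (x * y) = μ i x * μ i y)
    (hdist : Function.Injective μ) (hb : ∀ i, b i ≠ 0)
    (hfib : ∀ j, 2 ≤ (univ.filter fun i => J i = j).card)
    (heq : ∀ x y, f (x * y) = g x * h y + ∑ i, b i * μ i x * h' (J i) y)
    (hgind : LinearIndependent K (Fin.cons g μ : Fin (m + 1) → M → K)) (j : κ) (z : M) :
    h z * h' j 1 = h 1 * h' j z := by
  have hcoeff : ∀ i y, (h 1 * h' (J i) (y * z) - h z * h' (J i) y)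
      + μ i y * (h z * h' (J i) 1 - h 1 * h' (J i) z) = 0 := fun i y =>
    (mul_eq_zero.mp ((hgind.fin_cons_coeffs_eq_zero
      (assoc_identity hmul heq · y z)).2 i)).resolve_left (hb i)
  have := eq_zero_of_forall_add_mul_eq_zero hdist hfib
    (A := fun j y => h 1 * h' j (y * z) - h z * h' j y)
    (B := fun j => h z * h' j 1 - h 1 * h' j z) hcoeff j
  linear_combination this

theorem h'_one_eq_zero (hmul : ∀ i, ∀ x y : M, μ i (x * y) = μ i x * μ i y)
    (hdist : Function.Injective μ) (hb : ∀ i, b i ≠ 0)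
    (hfib : ∀ j, 2 ≤ (univ.filter fun i => J i = j).card)
    (heq : ∀ x y, f (x * y) = g x * h y + ∑ i, b i * μ i x * h' (J i) y)
    (hgind : LinearIndependent K (Fin.cons g μ : Fin (m + 1) → M → K)) (hh1 : h 1 = 0)
    (j : κ) : h' j 1 = 0 := by
  have hcoeff : ∀ i y, h' (J i) y + μ i y * -h' (J i) 1 = 0 := fun i y => by
    have hexp : ∀ x, h y * g x
        + ∑ i, b i * (h' (J i) y - μ i y * h' (J i) 1) * μ i x = 0 := fun x => by
      rw [← h_one_mul_g_mul hmul heq, hh1, zero_mul]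
    have := (mul_eq_zero.mp ((hgind.fin_cons_coeffs_eq_zero hexp).2 i)).resolve_left (hb i)
    linear_combination this
  exact neg_eq_zero.mp
    (eq_zero_of_forall_add_mul_eq_zero hdist hfib (A := h') (B := fun j => -h' j 1) hcoeff j)

theorem h_one_mul_f_mul (hmul : ∀ i, ∀ x y : M, μ i (x * y) = μ i x * μ i y)
    (hdist : Function.Injective μ) (hb : ∀ i, b i ≠ 0)
    (hfib : ∀ j, 2 ≤ (univ.filter fun i => J i = j).card)
    (heq : ∀ x y, f (x * y) = g x * h y + ∑ i, b i * μ i x * h' (J i) y)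
    (hgind : LinearIndependent K (Fin.cons g μ : Fin (m + 1) → M → K)) (x y : M) :
    h 1 * f (x * y) = h y * f x := by
  have hx1 := heq x 1
  rw [mul_one] at hx1
  rw [heq x y, hx1, mul_add, mul_add, mul_sum, mul_sum]
  congr 1
  · ring
  · exact sum_congr rfl fun i _ => by
      linear_combination -b i * μ i x * h_mul_h'_one hmul hdist hb hfib heq hgind (J i) y

end LeviCivitaEq

theorem stmt_14_general {M : Type*} [Monoid M] {K : Type*} [Field K] {m n : ℕ}
    (μ : Fin m → M → K)
    (hmul : ∀ i, ∀ x y : M, μ i (x * y) = μ i x * μ i y)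
    (hdist : Function.Injective μ)
    (b : Fin m → K) (hb : ∀ i, b i ≠ 0)
    (J : Fin m → Fin n)
    (hfib : ∀ j, 2 ≤ (Finset.univ.filter fun i => J i = j).card)
    (f g h : M → K) (h' : Fin n → M → K)
    (heq : ∀ x y, f (x * y) = g x * h y + ∑ i, b i * μ i x * h' (J i) y)
    (hf : f ≠ 0)
    (hgind : LinearIndependent K (Fin.cons g μ : Fin (m + 1) → M → K)) :
    f 1 ≠ 0 := by
  intro hf1
  refine hf (funext fun y => ?_)
  by_cases hh1 : h 1 = 0
  · simpa only [mul_one, hh1, LeviCivitaEq.h'_one_eq_zero hmul hdist hb hfib heq hgind hh1,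
      mul_zero, sum_const_zero, add_zero, Pi.zero_apply] using heq y 1
  · have h1y := LeviCivitaEq.h_one_mul_f_mul hmul hdist hb hfib heq hgind 1 y
    rw [one_mul, hf1, mul_zero] at h1y
    exact (mul_eq_zero.mp h1y).resolve_left hh1

/-- Under the hypotheses of the nondegenerate case, `f(e) ≠ 0`. -/
theorem stmt_14 {M : Type*} [Monoid M] {K : Type*} [Field K] {m n : ℕ}
    (μ : Fin m → M → K)
    (hmul : ∀ i, ∀ x y : M, μ i (x * y) = μ i x * μ i y)
    (hdist : Function.Injective μ) (hne : ∀ i, μ i ≠ 0)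
    (b : Fin m → K) (hb : ∀ i, b i ≠ 0)
    (J : Fin m → Fin n) (hJsurj : Function.Surjective J)
    (hfib : ∀ j, 2 ≤ (Finset.univ.filter fun i => J i = j).card)
    (f g h : M → K) (h' : Fin n → M → K)
    (heq : ∀ x y, f (x * y) = g x * h y + ∑ i, b i * μ i x * h' (J i) y)
    (hf : f ≠ 0)
    (hgind : LinearIndependent K (Fin.cons g μ : Fin (m + 1) → M → K)) :
    f 1 ≠ 0 :=
  stmt_14_general μ hmul hdist b hb J hfib f g h h' heq hf hgind
end
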